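/- arXiv:1510.07231 — 4 statements merged into one kernel-verified Lean document; each statement's English description precedes it below -/
import Mathlib

section
/- Let $a,b>0$ and $N\geq 5$ an integer, and define $g(t)=\dfrac{(1-at^2)[4-N(1-at^2)]}{4bNt^4}$ for $t\in(0,a^{-1/2})$. With $t^*=\sqrt{\tfrac{N-4}{(N-2)a}}$, the function $g$ is strictly increasing on $(0,t^*)$ and strictly decreasing on $(t^*,a^{-1/2})$. -/
private lemma key_inc (n X Y : ℝ) (hn : 4 < n) (hX0 : 0 < X) (hXY : X < Y)
    (hY : (n - 2) * Y < n - 4) :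
    (1 - X) * (4 - n * (1 - X)) * Y ^ 2 < (1 - Y) * (4 - n * (1 - Y)) * X ^ 2 := by
  have hX : (n - 2) * X < n - 4 := by nlinarith
  have h1 : 0 < Y - X := by linarith
  have h2 : 0 < X * ((n - 4) - (n - 2) * Y) + Y * ((n - 4) - (n - 2) * X) := by
    have := mul_pos hX0 (show 0 < (n - 4) - (n - 2) * Y by linarith)
    have := mul_pos (lt_trans hX0 hXY) (show 0 < (n - 4) - (n - 2) * X by linarith)
    linarith
  nlinarith [mul_pos h1 h2]

private lemma key_dec (n X Y : ℝ) (hn : 4 < n) (hXY : X < Y) (hY1 : Y < 1)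
    (hX : n - 4 < (n - 2) * X) :
    (1 - Y) * (4 - n * (1 - Y)) * X ^ 2 < (1 - X) * (4 - n * (1 - X)) * Y ^ 2 := by
  have hX0 : 0 < X := by nlinarith
  have hY : n - 4 < (n - 2) * Y := by nlinarith
  have h1 : 0 < Y - X := by linarith
  have h2 : X * ((n - 4) - (n - 2) * Y) + Y * ((n - 4) - (n - 2) * X) < 0 := by
    have := mul_pos hX0 (show 0 < (n - 2) * Y - (n - 4) by linarith)
    have := mul_pos (lt_trans hX0 hXY) (show 0 < (n - 2) * X - (n - 4) by linarith)
    nlinarith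
  nlinarith [mul_pos_of_neg_of_neg (show X * ((n-4)-(n-2)*Y) + Y * ((n-4)-(n-2)*X) - 0 < 0 by linarith) (show (0:ℝ) - (Y - X) < 0 by linarith)]

theorem stmt_6 (a b : ℝ) (ha : 0 < a) (hb : 0 < b) (N : ℕ) (hN : 5 ≤ N)
    (g : ℝ → ℝ)
    (hg : ∀ t, g t = (1 - a * t ^ 2) * (4 - (N : ℝ) * (1 - a * t ^ 2)) /
      (4 * b * (N : ℝ) * t ^ 4))
    (tstar : ℝ) (htstar : tstar = Real.sqrt (((N : ℝ) - 4) / (((N : ℝ) - 2) * a))) :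
    StrictMonoOn g (Set.Ioo 0 tstar) ∧
      StrictAntiOn g (Set.Ioo tstar (Real.sqrt a)⁻¹) := by
  have hN4 : (4 : ℝ) < (N : ℝ) := by exact_mod_cast (by omega : 4 < N)
  have hN2 : (0 : ℝ) < (N : ℝ) - 2 := by linarith
  have hNpos : (0 : ℝ) < (N : ℝ) := by linarith
  constructor
  · intro s hs t ht hst
    obtain ⟨hs0, hsT⟩ := hs
    obtain ⟨ht0, htT⟩ := ht
    -- a * t^2 < (N-4)/(N-2)
    have ht2 : t ^ 2 < ((N : ℝ) - 4) / (((N : ℝ) - 2) * a) := by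
      have := (Real.lt_sqrt ht0.le).mp (htstar ▸ htT)
      linarith
    have hY : ((N : ℝ) - 2) * (a * t ^ 2) < (N : ℝ) - 4 := by
      rw [lt_div_iff₀ (by positivity)] at ht2
      nlinarith
    have hXY : a * s ^ 2 < a * t ^ 2 :=
      mul_lt_mul_of_pos_left (by nlinarith : s ^ 2 < t ^ 2) ha
    have hX0 : 0 < a * s ^ 2 := by positivity
    have hkey := key_inc (N : ℝ) (a * s ^ 2) (a * t ^ 2) hN4 hX0 hXY hY
    rw [hg s, hg t, div_lt_div_iff₀ (by positivity) (by positivity)]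
    have h2 := mul_lt_mul_of_pos_left hkey (show (0:ℝ) < 4 * b * (N : ℝ) by positivity)
    refine lt_of_mul_lt_mul_right ?_ (le_of_lt (show (0:ℝ) < a ^ 2 by positivity))
    nlinarith [h2]
  · intro s hs t ht hst
    obtain ⟨hsT, hs1⟩ := hs
    obtain ⟨htT, ht1⟩ := ht
    have htspos : 0 < tstar := by
      rw [htstar]
      exact Real.sqrt_pos.mpr (div_pos (by linarith) (mul_pos hN2 ha))
    have hs0 : 0 < s := lt_trans htspos hsT
    have ht0 : 0 < t := lt_trans htspos htT
    -- (N-4)/(N-2) < a * s^2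
    have hs2 : ((N : ℝ) - 4) / (((N : ℝ) - 2) * a) < s ^ 2 := by
      have := (Real.sqrt_lt' hs0).mp (htstar ▸ hsT)
      linarith
    have hX : (N : ℝ) - 4 < ((N : ℝ) - 2) * (a * s ^ 2) := by
      rw [div_lt_iff₀ (by positivity)] at hs2
      nlinarith
    -- a * t^2 < 1
    have ht1' : t < Real.sqrt a⁻¹ := by
      rw [Real.sqrt_inv]; exact ht1
    have hY1 : a * t ^ 2 < 1 := by
      have := (Real.lt_sqrt ht0.le).mp ht1'
      have hainv : t ^ 2 < a⁻¹ := this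
      calc a * t ^ 2 < a * a⁻¹ := by exact mul_lt_mul_of_pos_left hainv ha
        _ = 1 := mul_inv_cancel₀ (ne_of_gt ha)
    have hXY : a * s ^ 2 < a * t ^ 2 :=
      mul_lt_mul_of_pos_left (by nlinarith : s ^ 2 < t ^ 2) ha
    have hkey := key_dec (N : ℝ) (a * s ^ 2) (a * t ^ 2) hN4 hXY hY1 hX
    rw [hg s, hg t, div_lt_div_iff₀ (by positivity) (by positivity)]
    have h2 := mul_lt_mul_of_pos_left hkey (show (0:ℝ) < 4 * b * (N : ℝ) by positivity)
    refine lt_of_mul_lt_mul_right ?_ (le_of_lt (show (0:ℝ) < a ^ 2 by positivity))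
    nlinarith [h2]
end

section
/- Let $a,b>0$ and define $\varphi(r)=\dfrac{a^2\left(2\sqrt{4a+b^2 r^4}-b r^2\right)r^2}{3\left(\sqrt{4a+b^2 r^4}-b r^2\right)^2}$ for $r>0$. Then $\varphi$ is strictly increasing on $(0,\infty)$, $\varphi(r)>0$ for all $r>0$, and $\varphi(r)\to+\infty$ as $r\to+\infty$. -/
/-! Put `s = √(4a + b²r⁴)` and `u = s + br²`. Since `s² - b²r⁴ = 4a`, both `s` and `br²` are
rational in `u` (`s - br² = 4a/u`), and `φ` collapses to the polynomial
`(u² - 4a)(u² + 12a) / (192 b)` in `u`, which increases for `u > 0`. As `r` runs through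
`(0, ∞)`, `u` increases from `2√a` to `∞`, and all three claims follow. -/

open Filter Set

namespace Kirchhoff

variable {a b : ℝ}

noncomputable def scale (a b r : ℝ) : ℝ := √(4 * a + b ^ 2 * r ^ 4) + b * r ^ 2

noncomputable def energy (a b u : ℝ) : ℝ := (u ^ 2 - 4 * a) * (u ^ 2 + 12 * a) / (192 * b)

lemma mul_sq_lt_sqrt (ha : 0 < a) (r : ℝ) : b * r ^ 2 < √(4 * a + b ^ 2 * r ^ 4) :=
  calc b * r ^ 2 ≤ |b * r ^ 2| := le_abs_self _
    _ = √((b * r ^ 2) ^ 2) := (Real.sqrt_sq_eq_abs _).symm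
    _ < √(4 * a + b ^ 2 * r ^ 4) := Real.sqrt_lt_sqrt (sq_nonneg _) (by nlinarith)

lemma energy_scale (ha : 0 < a) (hb : b ≠ 0) (r : ℝ) :
    energy a b (scale a b r) = a ^ 2 * (2 * √(4 * a + b ^ 2 * r ^ 4) - b * r ^ 2) * r ^ 2 /
      (3 * (√(4 * a + b ^ 2 * r ^ 4) - b * r ^ 2) ^ 2) := by
  have hlt := mul_sq_lt_sqrt (b := b) ha r
  unfold energy scale
  set s := √(4 * a + b ^ 2 * r ^ 4)
  have hs : s ^ 2 = 4 * a + b ^ 2 * r ^ 4 := Real.sq_sqrt (by positivity)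
  clear_value s
  obtain rfl : a = (s ^ 2 - b ^ 2 * r ^ 4) / 4 := by linarith
  have hne : s - b * r ^ 2 ≠ 0 := (sub_pos.mpr hlt).ne'
  field_simp
  ring

lemma scale_pos (hb : 0 < b) {r : ℝ} (hr : r ≠ 0) : 0 < scale a b r :=
  add_pos_of_nonneg_of_pos (Real.sqrt_nonneg _) (by positivity)

lemma four_mul_lt_scale_sq (ha : 0 ≤ a) (hb : 0 < b) {r : ℝ} (hr : r ≠ 0) :
    4 * a < scale a b r ^ 2 := by
  have hs : √(4 * a + b ^ 2 * r ^ 4) ^ 2 = 4 * a + b ^ 2 * r ^ 4 := Real.sq_sqrt (by positivity)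
  have hbr : 0 < b * r ^ 2 := by positivity
  unfold scale
  nlinarith [Real.sqrt_nonneg (4 * a + b ^ 2 * r ^ 4)]

lemma strictMonoOn_scale (ha : 0 ≤ a) (hb : 0 < b) : StrictMonoOn (scale a b) (Ioi 0) := by
  intro x hx y hy hxy
  have hx' : 0 < x := hx
  unfold scale
  gcongr

lemma tendsto_scale_atTop (hb : 0 < b) : Tendsto (scale a b) atTop atTop :=
  tendsto_atTop_mono (fun _ => le_add_of_nonneg_left (Real.sqrt_nonneg _))
    ((tendsto_pow_atTop two_ne_zero).const_mul_atTop hb)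

lemma strictMonoOn_energy (ha : 0 ≤ a) (hb : 0 < b) : StrictMonoOn (energy a b) (Ioi 0) := by
  intro x hx y hy hxy
  have hx' : 0 < x := hx
  have hsq : x ^ 2 < y ^ 2 := by gcongr
  have hmono : (x ^ 2 + 4 * a) ^ 2 < (y ^ 2 + 4 * a) ^ 2 := by gcongr
  unfold energy
  exact div_lt_div_of_pos_right (by linear_combination hmono) (by positivity)

lemma tendsto_energy_atTop (hb : 0 < b) : Tendsto (energy a b) atTop atTop := by
  refine Tendsto.atTop_div_const (by positivity) (Tendsto.atTop_mul_atTop₀ ?_ ?_) <;>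
    exact tendsto_atTop_add_const_right _ _ (tendsto_pow_atTop two_ne_zero)

end Kirchhoff

open Kirchhoff in
theorem stmt_13 (a b : ℝ) (ha : 0 < a) (hb : 0 < b)
    (φ : ℝ → ℝ)
    (hφ : ∀ r, φ r = a ^ 2 * (2 * Real.sqrt (4 * a + b ^ 2 * r ^ 4) - b * r ^ 2) * r ^ 2 /
      (3 * (Real.sqrt (4 * a + b ^ 2 * r ^ 4) - b * r ^ 2) ^ 2)) :
    StrictMonoOn φ (Set.Ioi 0) ∧ (∀ r, 0 < r → 0 < φ r) ∧
      Filter.Tendsto φ Filter.atTop Filter.atTop := by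
  obtain rfl : φ = energy a b ∘ scale a b :=
    funext fun r => (hφ r).trans (energy_scale ha hb.ne' r).symm
  refine ⟨(strictMonoOn_energy ha.le hb).comp (strictMonoOn_scale ha.le hb)
      fun _ hr => scale_pos hb hr.ne', fun r hr => ?_,
    (tendsto_energy_atTop hb).comp (tendsto_scale_atTop hb)⟩
  have h := four_mul_lt_scale_sq ha.le hb hr.ne'
  exact div_pos (mul_pos (by linarith) (by linarith)) (by positivity)
end

section
/- Let $a,b>0$, $N\geq 5$ an integer, and $g(t)=\frac{(1-at^2)[4-N(1-at^2)]}{4bNt^4}$ on $(0,a^{-1/2})$, with $t^*=\sqrt{(N-4)/((N-2)a)}$, $t^{**}=\sqrt{(N-4)/(Na)}$ and $c^*=g(t^*)=\frac{a^2}{N(N-4)b}$. Then for every $c\in(0,c^*)$ the equation $g(t)=c$ has exactly two solutions in $(0,a^{-1/2})$, namely $\tau_c=\sqrt{\frac{(N-2)a-2\sqrt{a^2-N(N-4)bc}}{N(a^2+4bc)}}\in(t^{**},t^*)$ and $\tau^c=\sqrt{\frac{(N-2)a+2\sqrt{a^2-N(N-4)bc}}{N(a^2+4bc)}}\in(t^*,a^{-1/2})$.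 -/
set_option maxHeartbeats 1000000 in
theorem stmt_16 (a b : ℝ) (ha : 0 < a) (hb : 0 < b) (N : ℕ) (hN : 5 ≤ N)
    (g : ℝ → ℝ)
    (hg : ∀ t, g t = (1 - a * t ^ 2) * (4 - (N : ℝ) * (1 - a * t ^ 2)) /
      (4 * b * (N : ℝ) * t ^ 4))
    (tstar tss cstar : ℝ)
    (htstar : tstar = Real.sqrt (((N : ℝ) - 4) / (((N : ℝ) - 2) * a)))
    (htss : tss = Real.sqrt (((N : ℝ) - 4) / ((N : ℝ) * a)))
    (hcstar : cstar = a ^ 2 / ((N : ℝ) * ((N : ℝ) - 4) * b))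
    (c : ℝ) (hc : c ∈ Set.Ioo 0 cstar)
    (τc τC : ℝ)
    (hτc : τc = Real.sqrt ((((N : ℝ) - 2) * a - 2 * Real.sqrt (a ^ 2 - (N : ℝ) * ((N : ℝ) - 4) * b * c)) /
      ((N : ℝ) * (a ^ 2 + 4 * b * c))))
    (hτC : τC = Real.sqrt ((((N : ℝ) - 2) * a + 2 * Real.sqrt (a ^ 2 - (N : ℝ) * ((N : ℝ) - 4) * b * c)) /
      ((N : ℝ) * (a ^ 2 + 4 * b * c)))) :
    g tstar = cstar ∧
      τc ∈ Set.Ioo tss tstar ∧ g τc = c ∧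
      τC ∈ Set.Ioo tstar (Real.sqrt a)⁻¹ ∧ g τC = c ∧
      ∀ t ∈ Set.Ioo 0 (Real.sqrt a)⁻¹, g t = c → t = τc ∨ t = τC := by
  obtain ⟨hc0, hcc⟩ := hc
  obtain ⟨n, hn_def⟩ : ∃ n : ℝ, n = (N : ℝ) := ⟨_, rfl⟩
  rw [← hn_def] at hg htstar htss hcstar hτc hτC
  have hn5 : (5:ℝ) ≤ n := by rw [hn_def]; exact_mod_cast hN
  have hn0 : (0:ℝ) < n := by linarith
  have hn4 : (0:ℝ) < n - 4 := by linarith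
  have hn2 : (0:ℝ) < n - 2 := by linarith
  have hD2 : 0 < a ^ 2 - n * (n - 4) * b * c := by
    rw [hcstar] at hcc
    nlinarith [(lt_div_iff₀ (by positivity : (0:ℝ) < n * (n - 4) * b)).mp hcc]
  obtain ⟨D, hD_def⟩ : ∃ D : ℝ, D = Real.sqrt (a ^ 2 - n * (n - 4) * b * c) := ⟨_, rfl⟩
  have hDsq : D ^ 2 = a ^ 2 - n * (n - 4) * b * c := by rw [hD_def]; exact Real.sq_sqrt hD2.le
  have hD0 : 0 < D := by rw [hD_def]; exact Real.sqrt_pos.mpr hD2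
  have hDa : D < a := by nlinarith [hDsq, mul_pos (mul_pos (mul_pos hn0 hn4) hb) hc0]
  obtain ⟨A, hA_def⟩ : ∃ A : ℝ, A = n * (a ^ 2 + 4 * b * c) := ⟨_, rfl⟩
  have hA : 0 < A := by rw [hA_def]; positivity
  obtain ⟨s₁, hs1_def⟩ : ∃ s : ℝ, s = ((n - 2) * a - 2 * D) / A := ⟨_, rfl⟩
  obtain ⟨s₂, hs2_def⟩ : ∃ s : ℝ, s = ((n - 2) * a + 2 * D) / A := ⟨_, rfl⟩
  have hτc' : τc = Real.sqrt s₁ := by rw [hs1_def, hA_def, hD_def]; exact hτc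
  have hτC' : τC = Real.sqrt s₂ := by rw [hs2_def, hA_def, hD_def]; exact hτC
  have hnum1 : 0 < (n - 2) * a - 2 * D := by nlinarith [mul_pos hn4 ha]
  have hnum2 : 0 < (n - 2) * a + 2 * D := by nlinarith [mul_pos hn2 ha]
  have hs1pos : 0 < s₁ := by rw [hs1_def]; exact div_pos hnum1 hA
  have hs2pos : 0 < s₂ := by rw [hs2_def]; exact div_pos hnum2 hA
  have e1l : A * s₁ = (n - 2) * a - 2 * D := by
    rw [hs1_def, mul_div_cancel₀ _ hA.ne']
  have e2l : A * s₂ = (n - 2) * a + 2 * D := by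
    rw [hs2_def, mul_div_cancel₀ _ hA.ne']
  have e12 : A * s₁ + A * s₂ = 2 * (n - 2) * a := by rw [e1l, e2l]; ring
  have e3 : A * (s₁ * s₂) = n - 4 := by
    have h' : A * (A * (s₁ * s₂)) = A * (n - 4) := by
      have e3' : (A * s₁) * (A * s₂) = (n - 4) * A := by
        rw [e1l, e2l]
        linear_combination (-4:ℝ) * hDsq - (n - 4) * hA_def
      linear_combination e3'
    exact mul_left_cancel₀ hA.ne' h'
  have heq : ∀ t : ℝ, (1 - a * t ^ 2) * (4 - n * (1 - a * t ^ 2)) - c * (4 * b * n * t ^ 4)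
      = -(A * ((t ^ 2 - s₁) * (t ^ 2 - s₂))) := by
    intro t
    linear_combination (-(t ^ 2)) * e12 + e3 + (t ^ 4) * hA_def
  have hkey : ∀ t : ℝ, t ≠ 0 → (g t = c ↔ (t ^ 2 - s₁) * (t ^ 2 - s₂) = 0) := by
    intro t ht
    have hden : (4 * b * n * t ^ 4) ≠ 0 := by positivity
    rw [hg, div_eq_iff hden]
    constructor
    · intro h
      have h2 : A * ((t ^ 2 - s₁) * (t ^ 2 - s₂)) = 0 := by
        linear_combination heq t - h
      exact (mul_eq_zero.mp h2).resolve_left hA.ne'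
    · intro h
      linear_combination heq t - A * h
  have hτc2 : τc ^ 2 = s₁ := by rw [hτc']; exact Real.sq_sqrt hs1pos.le
  have hτC2 : τC ^ 2 = s₂ := by rw [hτC']; exact Real.sq_sqrt hs2pos.le
  have hτcpos : 0 < τc := by rw [hτc']; exact Real.sqrt_pos.mpr hs1pos
  have hτCpos : 0 < τC := by rw [hτC']; exact Real.sqrt_pos.mpr hs2pos
  have hs1_gt : (n - 4) / (n * a) < s₁ := by
    rw [hs1_def, div_lt_div_iff₀ (by positivity) hA, hA_def]
    nlinarith [hDsq, mul_pos (sub_pos.mpr hDa) hnum1]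
  have hs1_lt : s₁ < (n - 4) / ((n - 2) * a) := by
    rw [hs1_def, div_lt_div_iff₀ hA (by positivity), hA_def]
    nlinarith [hDsq, mul_pos hD0 hnum1]
  have hs2_gt : (n - 4) / ((n - 2) * a) < s₂ := by
    rw [hs2_def, div_lt_div_iff₀ (by positivity) hA, hA_def]
    nlinarith [hDsq, mul_pos (mul_pos hn2 ha) hD0, sq_nonneg D]
  have hs2_lt : s₂ < a⁻¹ := by
    rw [hs2_def, hA_def, inv_eq_one_div, div_lt_div_iff₀ (by positivity) ha]
    nlinarith [mul_lt_mul_of_pos_left hDa ha, mul_pos (mul_pos hn0 hb) hc0]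
  refine ⟨?_, ⟨?_, ?_⟩, ?_, ⟨?_, ?_⟩, ?_, ?_⟩
  · have ht2 : tstar ^ 2 = (n - 4) / ((n - 2) * a) := by
      rw [htstar]; exact Real.sq_sqrt (by positivity)
    rw [hg, hcstar, show tstar ^ 4 = (tstar ^ 2) ^ 2 by ring, ht2]
    rw [div_eq_div_iff (by positivity) (by positivity)]
    field_simp
    ring
  · rw [htss, hτc']
    exact Real.sqrt_lt_sqrt (by positivity) hs1_gt
  · rw [htstar, hτc']
    exact Real.sqrt_lt_sqrt hs1pos.le hs1_lt
  · rw [hkey τc hτcpos.ne', hτc2, sub_self, zero_mul]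
  · rw [htstar, hτC']
    exact Real.sqrt_lt_sqrt (by positivity) hs2_gt
  · rw [hτC', ← Real.sqrt_inv]
    exact Real.sqrt_lt_sqrt hs2pos.le hs2_lt
  · rw [hkey τC hτCpos.ne', hτC2, sub_self, mul_zero]
  · intro t ht hgt
    obtain ⟨ht0, -⟩ := ht
    rcases mul_eq_zero.mp ((hkey t ht0.ne').mp hgt) with h | h
    · left
      rw [hτc', ← sub_eq_zero.mp h, Real.sqrt_sq ht0.le]
    · right
      rw [hτC', ← sub_eq_zero.mp h, Real.sqrt_sq ht0.le]
end

section
/- Let $a,b>0$, $N\geq 5$ an integer, $h(t)=t^{N-4}-at^{N-2}$, and for $c\in(0,c^*)$ with $c^*=\frac{a^2}{N(N-4)b}$ let $\tau_c=\sqrt{\frac{(N-2)a-2\sqrt{a^2-N(N-4)bc}}{N(a^2+4bc)}}$ and $\tau^c=\sqrt{\frac{(N-2)a+2\sqrt{a^2-N(N-4)bc}}{N(a^2+4bc)}}$. Then $h(\tau^c)<h(\tau_c)$ for every $c\in(0,c^*)$. -/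
/-!
Put `D = √(a² - N(N-4)bc)` and `M = N(a² + 4bc)`, so that `τ² = ((N-2)a ∓ 2D)/M`; since `τ²` solves
the defining quadratic, `(N-4)(1 - aτ²) = 2(a ± D)τ²`. Hence `h(τ)² = (τ²)^(N-4) (1 - aτ²)²` is, up to a
common positive factor, `x^(N-2) (a ± D)²` with `x = (N-2)a ∓ 2D`, and the claim reduces to
`(na + 2D)^n (a-D)² < (na - 2D)^n (a+D)²` for `n = N - 2 ≥ 3`. With `u = 2D/(na)`, `v = D/a` and
`L(s) = log((1+s)/(1-s))` this reads `n L(u) < 2 L(v)`; as `nu = 2v` and `u < v`, it follows from the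
strict monotonicity of `L(s)/s = 2 ∑ s^(2k)/(2k+1)` on `(0, 1)`.
-/

open Real

lemma mul_log_one_add_sub_log_one_sub_lt {u v : ℝ} (hu : 0 < u) (huv : u < v) (hv : v < 1) :
    v * (log (1 + u) - log (1 - u)) < u * (log (1 + v) - log (1 - v)) := by
  have hv₀ : 0 < v := hu.trans huv
  have hsum (x : ℝ) (hx : 0 < x) (hx1 : x < 1) :=
    hasSum_log_sub_log_of_abs_lt_one (abs_lt.2 ⟨by linarith, hx1⟩)
  have hterm (k : ℕ) (x y : ℝ) : y * (2 * (1 / (2 * k + 1)) * x ^ (2 * k + 1)) =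
      2 / (2 * k + 1) * (x * y) * x ^ (2 * k) := by ring
  refine hasSum_lt (i := 1) (fun k => ?_) ?_ ((hsum u hu (huv.trans hv)).mul_left v)
    ((hsum v hv₀ hv).mul_left u)
  all_goals
    simp only [hterm, mul_comm v u]
    gcongr

lemma one_add_pow_mul_one_sub_pow_lt {u v : ℝ} (hu : 0 < u) (huv : u < v) (hv : v < 1)
    {p q : ℕ} (hq : 0 < q) (hpq : p * u = q * v) :
    (1 + u) ^ p * (1 - v) ^ q < (1 - u) ^ p * (1 + v) ^ q := by
  have hlog : p * (log (1 + u) - log (1 - u)) < q * (log (1 + v) - log (1 - v)) := by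
    have := mul_lt_mul_of_pos_left (mul_log_one_add_sub_log_one_sub_lt hu huv hv)
      (Nat.cast_pos.2 hq : (0 : ℝ) < q)
    refine lt_of_mul_lt_mul_left ?_ hu.le
    linear_combination this + (log (1 + u) - log (1 - u)) * hpq
  have h₁ : 0 < 1 + u := by linarith
  have h₂ : 0 < 1 - u := by linarith
  have h₃ : 0 < 1 + v := by linarith
  have h₄ : 0 < 1 - v := by linarith
  rw [← log_lt_log_iff (by positivity) (by positivity), log_mul (by positivity) (by positivity),
    log_mul (by positivity) (by positivity), log_pow, log_pow, log_pow, log_pow]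
  linarith

lemma nat_mul_add_pow_mul_sub_sq_lt {a D : ℝ} (hD : 0 < D) (hDa : D < a) {n : ℕ} (hn : 3 ≤ n) :
    (n * a + 2 * D) ^ n * (a - D) ^ 2 < (n * a - 2 * D) ^ n * (a + D) ^ 2 := by
  have ha : 0 < a := hD.trans hDa
  have hn' : (3 : ℝ) ≤ n := by exact_mod_cast hn
  have hna : 0 < n * a := by positivity
  have huv : 2 * D / (n * a) < D / a := by
    rw [div_lt_div_iff₀ hna ha]
    nlinarith [mul_pos hD ha]
  have key := one_add_pow_mul_one_sub_pow_lt (by positivity) huv ((div_lt_one ha).2 hDa)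
    (p := n) (q := 2) two_pos (by push_cast; field_simp)
  have e₁ : n * a + 2 * D = n * a * (1 + 2 * D / (n * a)) := by field_simp
  have e₂ : n * a - 2 * D = n * a * (1 - 2 * D / (n * a)) := by field_simp
  have e₃ : a + D = a * (1 + D / a) := by field_simp
  have e₄ : a - D = a * (1 - D / a) := by field_simp
  calc (n * a + 2 * D) ^ n * (a - D) ^ 2
      = (n * a) ^ n * a ^ 2 * ((1 + 2 * D / (n * a)) ^ n * (1 - D / a) ^ 2) := by
        conv_lhs => rw [e₁, e₄, mul_pow, mul_pow]
        ring
    _ < (n * a) ^ n * a ^ 2 * ((1 - 2 * D / (n * a)) ^ n * (1 + D / a) ^ 2) := by gcongr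
    _ = (n * a - 2 * D) ^ n * (a + D) ^ 2 := by
        conv_rhs => rw [e₂, e₃, mul_pow, mul_pow]
        ring

lemma sq_pow_mul_one_sub_of_sq_eq {a k M x E τ : ℝ} (m : ℕ) (hM : M ≠ 0) (hτ : τ ^ 2 = x / M)
    (hE : k * (M - a * x) = E) :
    k ^ 2 * M ^ (m + 2) * (τ ^ m * (1 - a * τ ^ 2)) ^ 2 = x ^ m * E ^ 2 := by
  rw [mul_pow, ← pow_mul, mul_comm m 2, pow_mul, hτ, ← hE, div_pow]
  field_simp
  ring

lemma pow_mul_one_sub_lt_of_roots {a D M τ σ : ℝ} {m : ℕ} (hm : 0 < m) (hD : 0 < D)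
    (hDa : D < a) (hM : 0 < M) (hτ₀ : 0 ≤ τ)
    (hτ : τ ^ 2 = ((m + 2) * a - 2 * D) / M) (hσ : σ ^ 2 = ((m + 2) * a + 2 * D) / M)
    (hτM : m * (M - a * ((m + 2) * a - 2 * D)) = 2 * (a + D) * ((m + 2) * a - 2 * D))
    (hσM : m * (M - a * ((m + 2) * a + 2 * D)) = 2 * (a - D) * ((m + 2) * a + 2 * D)) :
    σ ^ m * (1 - a * σ ^ 2) < τ ^ m * (1 - a * τ ^ 2) := by
  have hm' : (0 : ℝ) < m := Nat.cast_pos.2 hm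
  have hx : 0 < (m + 2) * a - 2 * D := by nlinarith
  have hsq : (σ ^ m * (1 - a * σ ^ 2)) ^ 2 < (τ ^ m * (1 - a * τ ^ 2)) ^ 2 := by
    rw [← mul_lt_mul_iff_right₀ (by positivity : (0 : ℝ) < m ^ 2 * M ^ (m + 2)),
      sq_pow_mul_one_sub_of_sq_eq _ hM.ne' hσ hσM, sq_pow_mul_one_sub_of_sq_eq _ hM.ne' hτ hτM]
    have key := nat_mul_add_pow_mul_sub_sq_lt hD hDa (n := m + 2) (by omega)
    push_cast at key
    linear_combination 4 * key
  refine lt_of_pow_lt_pow_left₀ 2 (mul_nonneg (pow_nonneg hτ₀ _) ?_) hsq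
  rw [hτ, sub_nonneg, mul_div_assoc', div_le_one hM, ← sub_nonneg]
  exact (pos_of_mul_pos_right (hτM ▸ mul_pos (mul_pos two_pos (by linarith)) hx) hm'.le).le

theorem stmt_17 (a b : ℝ) (ha : 0 < a) (hb : 0 < b) (N : ℕ) (hN : 5 ≤ N)
    (h : ℝ → ℝ) (hh : ∀ t, h t = t ^ (N - 4) - a * t ^ (N - 2))
    (cstar : ℝ) (hcstar : cstar = a ^ 2 / ((N : ℝ) * ((N : ℝ) - 4) * b))
    (c : ℝ) (hc : c ∈ Set.Ioo 0 cstar)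
    (τc τC : ℝ)
    (hτc : τc = Real.sqrt ((((N : ℝ) - 2) * a - 2 * Real.sqrt (a ^ 2 - (N : ℝ) * ((N : ℝ) - 4) * b * c)) /
      ((N : ℝ) * (a ^ 2 + 4 * b * c))))
    (hτC : τC = Real.sqrt ((((N : ℝ) - 2) * a + 2 * Real.sqrt (a ^ 2 - (N : ℝ) * ((N : ℝ) - 4) * b * c)) /
      ((N : ℝ) * (a ^ 2 + 4 * b * c)))) :
    h τC < h τc := by
  obtain ⟨hc₀, hc⟩ := hc
  have hN₄ : ((N - 4 : ℕ) : ℝ) = N - 4 := by push_cast [Nat.cast_sub (by omega : 4 ≤ N)]; ring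
  have hN₂ : (N : ℝ) - 2 = (N - 4 : ℕ) + 2 := by rw [hN₄]; ring
  have hNb : 0 < (N : ℝ) * (N - 4) * b := by
    have : (5 : ℝ) ≤ N := by exact_mod_cast hN
    exact mul_pos (mul_pos (by linarith) (by linarith)) hb
  rw [hcstar, lt_div_iff₀ hNb] at hc
  set D := √(a ^ 2 - (N : ℝ) * (N - 4) * b * c)
  have hD₀ : 0 < D := sqrt_pos.2 (by linarith)
  have hDsq : D ^ 2 = a ^ 2 - (N : ℝ) * (N - 4) * b * c := sq_sqrt (by linarith)
  have hDa : D < a := by nlinarith [mul_pos hNb hc₀]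
  have hM : 0 < (N : ℝ) * (a ^ 2 + 4 * b * c) := by positivity
  have hh' (t : ℝ) : h t = t ^ (N - 4) * (1 - a * t ^ 2) := by
    rw [hh, show N - 2 = N - 4 + 2 by omega, pow_add]; ring
  rw [hh', hh']
  rw [hN₂] at hτc hτC
  refine pow_mul_one_sub_lt_of_roots (by omega) hD₀ hDa hM (hτc ▸ sqrt_nonneg _) ?_ ?_ ?_ ?_
  · rw [hτc]; exact sq_sqrt (div_nonneg (by nlinarith) hM.le)
  · rw [hτC]; exact sq_sqrt (div_nonneg (by positivity) hM.le)
  all_goals rw [hN₄]; linear_combination 4 * hDsq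
end
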